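/- Let 1 ≤ p < q < ∞ and d ≥ 1. Define on ℝ^d: f(x) = |x|^{-d/q}, k(x) = [χ_{(0,1)}(|x|) − χ_{(1,∞)}(|x|)]f(x), and for 0 < ε < 1, u(x) = [χ_{(0,ε)}(|x|) − χ_{(ε,1)}(|x|) + χ_{(1,1/ε)}(|x|) − χ_{(1/ε,∞)}(|x|)]f(x). Then ‖f‖_{M^p_q} = ‖k‖_{M^p_q} = ‖u‖_{M^p_q}, and for every choice of signs, ‖f ± k ± u‖_{M^p_q} ≥ 3(1 − ε^{d−dp/q})^{1/p} ‖f‖_{M^p_q}. -/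

import Mathlib

open MeasureTheory Metric ENNReal

/-- The small Morrey norm: sup over centers `a` and radii `R ∈ (0,1)` of
`|B(a,R)|^(1/q-1/p) (∫_{B(a,R)} |f|^p)^(1/p)`, valued in `ℝ≥0∞`. -/
noncomputable def smallMorreyNorm (d : ℕ) (p q : ℝ)
    (f : EuclideanSpace ℝ (Fin d) → ℝ) : ℝ≥0∞ :=
  ⨆ (a : EuclideanSpace ℝ (Fin d)) (R : ℝ) (_ : 0 < R) (_ : R < 1),
    volume (ball a R) ^ (1 / q - 1 / p) *
      (∫⁻ y in ball a R, ENNReal.ofReal (|f y| ^ p)) ^ (1 / p)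

/-- The (classical) Morrey norm: sup over all centers `a` and radii `R > 0`. -/
noncomputable def morreyNorm (d : ℕ) (p q : ℝ)
    (f : EuclideanSpace ℝ (Fin d) → ℝ) : ℝ≥0∞ :=
  ⨆ (a : EuclideanSpace ℝ (Fin d)) (R : ℝ) (_ : 0 < R),
    volume (ball a R) ^ (1 / q - 1 / p) *
      (∫⁻ y in ball a R, ENNReal.ofReal (|f y| ^ p)) ^ (1 / p)

/-!
The weight `|f|^p = |x|^(-dp/q)` is radially decreasing, so by the layer-cake formula its
integral over a ball `B(a,R)` is at most its integral over `B(0,R)`; and it is homogeneous of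
degree `-dp/q`, which exactly cancels the factor `|B(0,R)|^(1/q-1/p)`. Hence every centred ball
realises `‖f‖_{M^p_q}`. Since `|k| = |u| = |f|` off finitely many spheres, the three norms agree.
For each choice of signs, `f ± k ± u = 3f` on an annulus `εR < |x| < R` (with
`R = ε, 1, 1/ε, 1/ε²`), and by homogeneity this annulus carries the fraction `1 - ε^(d-dp/q)` of
the integral of `|f|^p` over `B(0,R)`.
-/

open Set Module

section SuperlevelNested

variable {α : Type*} [MeasurableSpace α] {μ : Measure α}

theorem setLIntegral_le_of_superlevel_nested {f : α → ℝ} (hf_nn : 0 ≤ f) (hf : Measurable f)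
    {s B : Set α} (hsB : μ s ≤ μ B) (hnest : ∀ t > 0, {a | t ≤ f a} ⊆ B ∨ B ⊆ {a | t ≤ f a}) :
    ∫⁻ a in s, ENNReal.ofReal (f a) ∂μ ≤ ∫⁻ a in B, ENNReal.ofReal (f a) ∂μ := by
  rw [lintegral_eq_lintegral_meas_le _ (ae_of_all _ hf_nn) hf.aemeasurable,
    lintegral_eq_lintegral_meas_le _ (ae_of_all _ hf_nn) hf.aemeasurable]
  refine setLIntegral_mono' measurableSet_Ioi fun t ht => ?_
  have hL : MeasurableSet {a | t ≤ f a} := measurableSet_le measurable_const hf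
  rw [Measure.restrict_apply hL, Measure.restrict_apply hL]
  rcases hnest t ht with hLB | hBL
  · rw [inter_eq_self_of_subset_left hLB]
    exact measure_mono inter_subset_left
  · rw [inter_eq_self_of_subset_right hBL]
    exact (measure_mono inter_subset_right).trans hsB

end SuperlevelNested

section NormRpow

variable {E : Type*} [NormedAddCommGroup E] [NormedSpace ℝ E] [FiniteDimensional ℝ E]
  [MeasurableSpace E] [BorelSpace E] (μ : Measure E) [μ.IsAddHaarMeasure]

theorem ae_norm_ne [Nontrivial E] (r : ℝ) : ∀ᵐ x ∂μ, ‖x‖ ≠ r :=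
  measure_mono_null (fun x hx => by simpa using hx) (Measure.addHaar_sphere μ 0 r)

theorem lintegral_comp_const_smul {f : E → ℝ≥0∞} (hf : Measurable f) {r : ℝ} (hr : r ≠ 0) :
    ∫⁻ x, f (r • x) ∂μ = ENNReal.ofReal |(r ^ finrank ℝ E)⁻¹| * ∫⁻ x, f x ∂μ := by
  rw [← lintegral_map hf (measurable_const_smul r), Measure.map_addHaar_smul μ hr,
    lintegral_smul_measure, smul_eq_mul]

theorem setLIntegral_ball_mul_norm_rpow_neg (γ : ℝ) {r : ℝ} (hr : 0 < r) (R : ℝ) :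
    ∫⁻ y in ball 0 (r * R), ENNReal.ofReal (‖y‖ ^ (-γ)) ∂μ =
      ENNReal.ofReal (r ^ ((finrank ℝ E : ℝ) - γ)) *
        ∫⁻ y in ball 0 R, ENNReal.ofReal (‖y‖ ^ (-γ)) ∂μ := by
  set F : E → ℝ≥0∞ := fun y => ENNReal.ofReal (‖y‖ ^ (-γ))
  have hF : Measurable F := by fun_prop
  have hnorm (x : E) : ‖r • x‖ = r * ‖x‖ := by rw [norm_smul, Real.norm_of_nonneg hr.le]
  have hsubst (x : E) : (ball 0 (r * R)).indicator F (r • x) =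
      ENNReal.ofReal (r ^ (-γ)) * (ball 0 R).indicator F x := by
    classical
    simp only [indicator_apply, mem_ball_zero_iff, hnorm, mul_lt_mul_iff_right₀ hr]
    split_ifs
    · simp only [F, hnorm, Real.mul_rpow hr.le (norm_nonneg x)]
      exact ENNReal.ofReal_mul (by positivity)
    · rw [mul_zero]
  have key := lintegral_comp_const_smul μ (f := (ball (0 : E) (r * R)).indicator F)
    (hF.indicator measurableSet_ball) hr.ne'
  simp only [hsubst, lintegral_const_mul _ (hF.indicator measurableSet_ball),
    lintegral_indicator measurableSet_ball] at key
  calc ∫⁻ y in ball 0 (r * R), F y ∂μ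
      = ENNReal.ofReal (r ^ finrank ℝ E) *
          (ENNReal.ofReal |(r ^ finrank ℝ E)⁻¹| * ∫⁻ y in ball 0 (r * R), F y ∂μ) := by
        rw [← mul_assoc, ← ENNReal.ofReal_mul (by positivity), abs_of_pos (by positivity),
          mul_inv_cancel₀ (by positivity), ENNReal.ofReal_one, one_mul]
    _ = ENNReal.ofReal (r ^ ((finrank ℝ E : ℝ) - γ)) * ∫⁻ y in ball 0 R, F y ∂μ := by
        rw [← key, ← mul_assoc, ← ENNReal.ofReal_mul (by positivity), ← Real.rpow_natCast,
          ← Real.rpow_add hr, sub_eq_add_neg]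

theorem setLIntegral_ball_norm_rpow_neg_le [Nontrivial E] {γ : ℝ} (hγ : 0 < γ) (a : E) (R : ℝ) :
    ∫⁻ y in ball a R, ENNReal.ofReal (‖y‖ ^ (-γ)) ∂μ ≤
      ∫⁻ y in ball 0 R, ENNReal.ofReal (‖y‖ ^ (-γ)) ∂μ := by
  -- The superlevel sets of `‖·‖ ^ (-γ)` are closed balls about `0` punctured at `0`, so they are
  -- nested with `ball 0 R \ {0}` rather than with `ball 0 R`.
  have h0 : μ ({0} : Set E) = 0 := measure_singleton 0
  rw [← setLIntegral_congr (sdiff_null_ae_eq_self (s := ball (0 : E) R) h0)]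
  refine setLIntegral_le_of_superlevel_nested (fun y => by positivity) (by fun_prop) ?_ ?_
  · rw [measure_sdiff_null h0, Measure.addHaar_ball_center]
  intro t ht
  have hzero : ¬t ≤ ‖(0 : E)‖ ^ (-γ) := by
    rw [norm_zero, Real.zero_rpow (by linarith)]; exact not_le.2 ht
  rcases lt_or_ge (t ^ (-γ)⁻¹) R with hρ | hρ
  · refine Or.inl fun y (hy : t ≤ ‖y‖ ^ (-γ)) => ?_
    have hy0 : y ≠ 0 := by rintro rfl; exact hzero hy
    refine ⟨mem_ball_zero_iff.2 ?_, hy0⟩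
    exact ((Real.le_rpow_inv_iff_of_neg (norm_pos_iff.2 hy0) ht (by linarith)).2 hy).trans_lt hρ
  · refine Or.inr fun y ⟨hyR, hy0⟩ => ?_
    exact (Real.le_rpow_inv_iff_of_neg (norm_pos_iff.2 hy0) ht (by linarith)).1
      ((mem_ball_zero_iff.1 hyR).le.trans hρ)

theorem setLIntegral_ball_norm_rpow_neg_lt_top [Nontrivial E] {γ : ℝ} (hγ : γ < finrank ℝ E)
    (R : ℝ) : ∫⁻ y in ball 0 R, ENNReal.ofReal (‖y‖ ^ (-γ)) ∂μ < ⊤ :=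
  (integrableOn_ball_of_norm_le_rpow (μ := μ) (C := 1) finrank_pos hγ
    (ae_of_all _ fun y => by simp [abs_of_nonneg (by positivity : (0 : ℝ) ≤ ‖y‖ ^ (-γ))])
    (by fun_prop : Measurable fun y : E => ‖y‖ ^ (-γ)).aestronglyMeasurable).setLIntegral_lt_top

theorem setLIntegral_annulus_norm_rpow_neg [Nontrivial E] {γ : ℝ} (hγ : γ < finrank ℝ E)
    {ε R : ℝ} (hε0 : 0 < ε) (hε1 : ε < 1) (hR : 0 < R) :
    ∫⁻ y in ball 0 R \ closedBall 0 (ε * R), ENNReal.ofReal (‖y‖ ^ (-γ)) ∂μ =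
      (1 - ENNReal.ofReal (ε ^ ((finrank ℝ E : ℝ) - γ))) *
        ∫⁻ y in ball 0 R, ENNReal.ofReal (‖y‖ ^ (-γ)) ∂μ := by
  have hinner : ∫⁻ y in closedBall 0 (ε * R), ENNReal.ofReal (‖y‖ ^ (-γ)) ∂μ =
      ∫⁻ y in ball 0 (ε * R), ENNReal.ofReal (‖y‖ ^ (-γ)) ∂μ := by
    rw [← closedBall_sdiff_sphere]
    exact (setLIntegral_congr (sdiff_null_ae_eq_self (Measure.addHaar_sphere μ 0 _))).symm
  have hsplit := lintegral_union (μ := μ) (f := fun y => ENNReal.ofReal (‖y‖ ^ (-γ)))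
    (measurableSet_ball.diff measurableSet_closedBall)
    (disjoint_sdiff_self_right (x := closedBall (0 : E) (ε * R)) (y := ball 0 R))
  rw [union_sdiff_cancel (closedBall_subset_ball (by nlinarith)), hinner,
    setLIntegral_ball_mul_norm_rpow_neg μ γ hε0] at hsplit
  have hfin := (setLIntegral_ball_norm_rpow_neg_lt_top μ hγ R).ne
  rw [ENNReal.sub_mul fun _ _ => hfin, one_mul]
  exact ENNReal.eq_sub_of_add_eq (ENNReal.mul_ne_top ofReal_ne_top hfin)
    ((add_comm _ _).trans hsplit.symm)

end NormRpow

section Morrey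

variable {d : ℕ} {p q : ℝ}

noncomputable def morreyBallTerm (d : ℕ) (p q : ℝ) (g : EuclideanSpace ℝ (Fin d) → ℝ)
    (a : EuclideanSpace ℝ (Fin d)) (R : ℝ) : ℝ≥0∞ :=
  volume (ball a R) ^ (1 / q - 1 / p) * (∫⁻ y in ball a R, ENNReal.ofReal (|g y| ^ p)) ^ (1 / p)

theorem morreyBallTerm_le_morreyNorm (g : EuclideanSpace ℝ (Fin d) → ℝ)
    (a : EuclideanSpace ℝ (Fin d)) {R : ℝ} (hR : 0 < R) :
    morreyBallTerm d p q g a R ≤ morreyNorm d p q g :=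
  le_iSup₂_of_le a R (le_iSup_of_le hR le_rfl)

theorem morreyNorm_congr_abs {g₁ g₂ : EuclideanSpace ℝ (Fin d) → ℝ}
    (h : ∀ᵐ y ∂volume, |g₁ y| = |g₂ y|) : morreyNorm d p q g₁ = morreyNorm d p q g₂ := by
  have hint (a : EuclideanSpace ℝ (Fin d)) (R : ℝ) :
      ∫⁻ y in ball a R, ENNReal.ofReal (|g₁ y| ^ p) =
        ∫⁻ y in ball a R, ENNReal.ofReal (|g₂ y| ^ p) :=
    lintegral_congr_ae (ae_restrict_of_ae (h.mono fun y hy => by simp only [hy]))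
  simp only [morreyNorm, hint]

theorem abs_norm_rpow_neg_div_rpow (y : EuclideanSpace ℝ (Fin d)) :
    |‖y‖ ^ (-(d : ℝ) / q)| ^ p = ‖y‖ ^ (-(d * p / q)) := by
  rw [abs_of_nonneg (by positivity), ← Real.rpow_mul (norm_nonneg y)]
  ring_nf

theorem natCast_mul_div_lt [NeZero d] (hq : 0 < q) (hpq : p < q) : (d : ℝ) * p / q < d := by
  rw [mul_div_assoc]
  exact mul_lt_of_lt_one_right (Nat.cast_pos.2 (NeZero.pos d)) ((div_lt_one hq).2 hpq)

theorem morreyBallTerm_norm_rpow_zero_eq (hp : 0 < p) {R : ℝ} (hR : 0 < R) :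
    morreyBallTerm d p q (fun x => ‖x‖ ^ (-(d : ℝ) / q)) 0 R =
      morreyBallTerm d p q (fun x => ‖x‖ ^ (-(d : ℝ) / q)) 0 1 := by
  have hscale := setLIntegral_ball_mul_norm_rpow_neg
    (volume : Measure (EuclideanSpace ℝ (Fin d))) (d * p / q) hR 1
  rw [mul_one, finrank_euclideanSpace_fin] at hscale
  simp only [morreyBallTerm, abs_norm_rpow_neg_div_rpow, hscale]
  rw [Measure.addHaar_ball_of_pos volume (0 : EuclideanSpace ℝ (Fin d)) hR,
    finrank_euclideanSpace_fin, ENNReal.mul_rpow_of_ne_top ofReal_ne_top measure_ball_lt_top.ne,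
    ENNReal.mul_rpow_of_nonneg _ _ (by positivity), mul_mul_mul_comm,
    ENNReal.ofReal_rpow_of_pos (by positivity), ENNReal.ofReal_rpow_of_pos (by positivity),
    ← ENNReal.ofReal_mul (by positivity), ← Real.rpow_natCast, ← Real.rpow_mul hR.le,
    ← Real.rpow_mul hR.le, ← Real.rpow_add hR]
  have hexp : (d : ℝ) * (1 / q - 1 / p) + (d - d * p / q) * (1 / p) = 0 := by
    field_simp
    ring
  rw [hexp, Real.rpow_zero, ENNReal.ofReal_one, one_mul]

theorem morreyNorm_norm_rpow_eq [NeZero d] (hp : 0 < p) (hq : 0 < q) {R : ℝ} (hR : 0 < R) :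
    morreyNorm d p q (fun x => ‖x‖ ^ (-(d : ℝ) / q)) =
      morreyBallTerm d p q (fun x => ‖x‖ ^ (-(d : ℝ) / q)) 0 R := by
  refine le_antisymm (iSup_le fun a => iSup_le fun r => iSup_le fun hr => ?_)
    (morreyBallTerm_le_morreyNorm _ 0 hR)
  have hd : (0 : ℝ) < d := Nat.cast_pos.2 (NeZero.pos d)
  calc morreyBallTerm d p q (fun x => ‖x‖ ^ (-(d : ℝ) / q)) a r
      ≤ morreyBallTerm d p q (fun x => ‖x‖ ^ (-(d : ℝ) / q)) 0 r := by
        simp only [morreyBallTerm, Measure.addHaar_ball_center volume a,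
          abs_norm_rpow_neg_div_rpow]
        gcongr _ * ?_ ^ _
        exact setLIntegral_ball_norm_rpow_neg_le volume (γ := d * p / q) (by positivity) a r
    _ = morreyBallTerm d p q (fun x => ‖x‖ ^ (-(d : ℝ) / q)) 0 R := by
        rw [morreyBallTerm_norm_rpow_zero_eq hp hr, morreyBallTerm_norm_rpow_zero_eq hp hR]

theorem setLIntegral_ball_abs_rpow_ge_of_annulus [NeZero d] (hp : 0 < p) (hpq : p < q)
    {ε R c : ℝ} (hε0 : 0 < ε) (hε1 : ε < 1) (hR : 0 < R) (hc : 0 ≤ c)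
    {g : EuclideanSpace ℝ (Fin d) → ℝ}
    (hg : ∀ x, ε * R < ‖x‖ → ‖x‖ < R → g x = c * ‖x‖ ^ (-(d : ℝ) / q)) :
    ENNReal.ofReal (c ^ p * (1 - ε ^ ((d : ℝ) - d * p / q))) *
        ∫⁻ y in ball (0 : EuclideanSpace ℝ (Fin d)) R, ENNReal.ofReal (‖y‖ ^ (-(d * p / q))) ≤
      ∫⁻ y in ball (0 : EuclideanSpace ℝ (Fin d)) R, ENNReal.ofReal (|g y| ^ p) := by
  have hγd := natCast_mul_div_lt (d := d) (hp.trans hpq) hpq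
  have hannulus := setLIntegral_annulus_norm_rpow_neg volume
    (by rwa [finrank_euclideanSpace_fin]) hε0 hε1 hR
  rw [finrank_euclideanSpace_fin] at hannulus
  have hβ : ε ^ ((d : ℝ) - d * p / q) ≤ 1 :=
    Real.rpow_le_one hε0.le hε1.le (sub_nonneg.2 hγd.le)
  calc _ = ∫⁻ y in ball (0 : EuclideanSpace ℝ (Fin d)) R \ closedBall 0 (ε * R),
          ENNReal.ofReal (c ^ p * ‖y‖ ^ (-(d * p / q))) := by
        rw [ENNReal.ofReal_mul (by positivity), ENNReal.ofReal_sub _ (by positivity),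
          ENNReal.ofReal_one, mul_assoc, ← hannulus, ← lintegral_const_mul _ (by fun_prop)]
        simp only [ENNReal.ofReal_mul (by positivity : (0 : ℝ) ≤ c ^ p)]
    _ = ∫⁻ y in ball (0 : EuclideanSpace ℝ (Fin d)) R \ closedBall 0 (ε * R),
          ENNReal.ofReal (|g y| ^ p) := by
        refine setLIntegral_congr_fun (measurableSet_ball.diff measurableSet_closedBall)
          fun y ⟨hyR, hyε⟩ => ?_
        rw [hg y (not_le.1 (mt mem_closedBall_zero_iff.2 hyε)) (mem_ball_zero_iff.1 hyR),
          abs_mul, abs_of_nonneg hc, Real.mul_rpow hc (abs_nonneg _), abs_norm_rpow_neg_div_rpow]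
    _ ≤ ∫⁻ y in ball (0 : EuclideanSpace ℝ (Fin d)) R, ENNReal.ofReal (|g y| ^ p) :=
        lintegral_mono_set sdiff_subset

theorem morreyNorm_ge_of_annulus [NeZero d] (hp : 0 < p) (hpq : p < q) {ε R c : ℝ}
    (hε0 : 0 < ε) (hε1 : ε < 1) (hR : 0 < R) (hc : 0 ≤ c) {g : EuclideanSpace ℝ (Fin d) → ℝ}
    (hg : ∀ x, ε * R < ‖x‖ → ‖x‖ < R → g x = c * ‖x‖ ^ (-(d : ℝ) / q)) :
    ENNReal.ofReal (c * (1 - ε ^ ((d : ℝ) - d * p / q)) ^ (1 / p)) *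
        morreyNorm d p q (fun x => ‖x‖ ^ (-(d : ℝ) / q)) ≤ morreyNorm d p q g := by
  rw [morreyNorm_norm_rpow_eq hp (hp.trans hpq) hR]
  refine le_trans ?_ (morreyBallTerm_le_morreyNorm g 0 hR)
  simp only [morreyBallTerm, abs_norm_rpow_neg_div_rpow]
  rw [mul_left_comm]
  gcongr
  have hβ : ε ^ ((d : ℝ) - d * p / q) ≤ 1 :=
    Real.rpow_le_one hε0.le hε1.le (sub_nonneg.2 (natCast_mul_div_lt (hp.trans hpq) hpq).le)
  calc _ = (ENNReal.ofReal (c ^ p * (1 - ε ^ ((d : ℝ) - d * p / q))) *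
        ∫⁻ y in ball (0 : EuclideanSpace ℝ (Fin d)) R,
          ENNReal.ofReal (‖y‖ ^ (-(d * p / q)))) ^ (1 / p) := by
        rw [ENNReal.mul_rpow_of_nonneg _ _ (by positivity),
          ENNReal.ofReal_rpow_of_nonneg (mul_nonneg (by positivity) (by linarith)) (by positivity),
          Real.mul_rpow (by positivity) (by linarith), ← Real.rpow_mul hc,
          mul_one_div_cancel hp.ne', Real.rpow_one]
    _ ≤ _ := by gcongr; exact setLIntegral_ball_abs_rpow_ge_of_annulus hp hpq hε0 hε1 hR hc hg

end Morrey

/-- with `f(x) = |x|^{-d/q}`,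
`k = (χ_{(0,1)} - χ_{(1,∞)})(|·|) f` and
`u = (χ_{(0,ε)} - χ_{(ε,1)} + χ_{(1,1/ε)} - χ_{(1/ε,∞)})(|·|) f`, the three Morrey
norms coincide and `‖f ± k ± u‖ ≥ 3(1-ε^{d-dp/q})^{1/p} ‖f‖` for every choice of
signs. -/
theorem morrey_octahedral_lower (d : ℕ) (p q : ℝ) (hp : 1 ≤ p) (hpq : p < q)
    (hd : 1 ≤ d) (ε : ℝ) (hε0 : 0 < ε) (hε1 : ε < 1) :
    letI f : EuclideanSpace ℝ (Fin d) → ℝ := fun x => ‖x‖ ^ (-(d : ℝ) / q)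
    letI k : EuclideanSpace ℝ (Fin d) → ℝ :=
      fun x => ((if 0 < ‖x‖ ∧ ‖x‖ < 1 then (1 : ℝ) else 0) -
        (if 1 < ‖x‖ then (1 : ℝ) else 0)) * f x
    letI u : EuclideanSpace ℝ (Fin d) → ℝ :=
      fun x => ((if 0 < ‖x‖ ∧ ‖x‖ < ε then (1 : ℝ) else 0) -
        (if ε < ‖x‖ ∧ ‖x‖ < 1 then (1 : ℝ) else 0) +
        (if 1 < ‖x‖ ∧ ‖x‖ < 1 / ε then (1 : ℝ) else 0) -
        (if 1 / ε < ‖x‖ then (1 : ℝ) else 0)) * f x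
    (morreyNorm d p q f = morreyNorm d p q k ∧
        morreyNorm d p q k = morreyNorm d p q u) ∧
      ∀ s t : ℝ, (s = 1 ∨ s = -1) → (t = 1 ∨ t = -1) →
        ENNReal.ofReal (3 * (1 - ε ^ ((d : ℝ) - d * p / q)) ^ (1 / p)) *
            morreyNorm d p q f ≤
          morreyNorm d p q (fun x => f x + s * k x + t * u x) := by
  have : NeZero d := ⟨by omega⟩
  have hp0 : 0 < p := by linarith
  have h1ε : 1 < 1 / ε := by rw [lt_div_iff₀ hε0]; linarith
  have hgeneric : ∀ᵐ x ∂(volume : Measure (EuclideanSpace ℝ (Fin d))),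
      0 < ‖x‖ ∧ ‖x‖ ≠ ε ∧ ‖x‖ ≠ 1 ∧ ‖x‖ ≠ 1 / ε := by
    filter_upwards [ae_norm_ne volume 0, ae_norm_ne volume ε, ae_norm_ne volume 1,
      ae_norm_ne volume (1 / ε)] with x h0 hε h1 h1ε
    exact ⟨(norm_nonneg x).lt_of_ne' h0, hε, h1, h1ε⟩
  refine ⟨⟨morreyNorm_congr_abs ?_, morreyNorm_congr_abs ?_⟩, ?_⟩
  iterate 2
    filter_upwards [hgeneric] with x hx
    simp only [abs_mul]
    split_ifs <;> grind
  rintro s t (rfl | rfl) (rfl | rfl)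
  · exact morreyNorm_ge_of_annulus hp0 hpq hε0 hε1 hε0 (by norm_num)
      fun x h₁ h₂ => by beta_reduce; grind [mul_pos hε0 hε0]
  · exact morreyNorm_ge_of_annulus hp0 hpq hε0 hε1 one_pos (by norm_num)
      fun x h₁ h₂ => by beta_reduce; grind
  · exact morreyNorm_ge_of_annulus hp0 hpq hε0 hε1 (one_div_pos.2 hε0) (by norm_num)
      fun x h₁ h₂ => by beta_reduce; grind
  · have hR : ε * (1 / ε / ε) = 1 / ε := by field_simp
    exact morreyNorm_ge_of_annulus hp0 hpq hε0 hε1 (by positivity : 0 < 1 / ε / ε) (by norm_num)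
      fun x h₁ h₂ => by rw [hR] at h₁; beta_reduce; grind
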